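/- arXiv:2111.05016 — 14 statements merged into one kernel-verified Lean document; each statement's English description precedes it below -/
import Mathlib

section
/- For all strings p, u, v, x, y: if p occurs in u ++ v ++ x ++ y, then p occurs in u ++ v ++ x, or p occurs in v ++ x ++ y, or v ++ x is a substring of p. -/
/-- `u` occurs in `w` at position `i`. -/
def OccursAt {α : Type*} (u w : List α) (i : ℕ) : Prop :=
  ∃ w₁ w₂ : List α, w = w₁ ++ u ++ w₂ ∧ w₁.length = i

/-- `d` is a period of `u` (1-based indexing: `u[i] = u[i+d]` for `1 ≤ i ≤ |u| - d`). -/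
def IsPeriod {α : Type*} (u : List α) (d : ℕ) : Prop :=
  1 ≤ d ∧ ∀ i : ℕ, 1 ≤ i → i + d ≤ u.length → u[i-1]? = u[i+d-1]?

/-- `s` is the longest suffix of `u` that is a prefix of `p`. -/
def IsLongestSufPre {α : Type*} (p u s : List α) : Prop :=
  s <:+ u ∧ s <+: p ∧ ∀ t : List α, t <:+ u → t <+: p → t.length ≤ s.length

/-- `s` is the longest prefix of `u` that is a suffix of `p`. -/
def IsLongestPreSuf {α : Type*} (p u s : List α) : Prop :=
  s <+: u ∧ s <:+ p ∧ ∀ t : List α, t <+: u → t <:+ p → t.length ≤ s.length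

theorem stmt_2 {α : Type*} (p u v x y : List α)
    (h : p <:+: (u ++ v ++ x ++ y)) :
    p <:+: (u ++ v ++ x) ∨ p <:+: (v ++ x ++ y) ∨ (v ++ x) <:+: p := by
  obtain ⟨s, t, hst⟩ := h
  have hsp : s ++ p <+: u ++ v ++ x ++ y := ⟨t, by simpa [List.append_assoc] using hst⟩
  have hs : s <+: u ++ v ++ x ++ y := (List.prefix_append s p).trans hsp
  by_cases hA : s.length + p.length ≤ (u ++ v ++ x).length
  · left
    have h1 : s ++ p <+: u ++ v ++ x :=
      List.prefix_of_prefix_length_le hsp (List.prefix_append _ y)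
        (by simpa using hA)
    exact ((List.suffix_append s p).isInfix).trans h1.isInfix
  · by_cases hB : u.length ≤ s.length
    · right; left
      have hu : u <+: s :=
        List.prefix_of_prefix_length_le
          (by simp [List.append_assoc]) hs hB
      obtain ⟨s', hs'⟩ := hu
      refine ⟨s', t, ?_⟩
      have := hst
      rw [← hs'] at this
      simpa [List.append_assoc] using this
    · right; right
      push_neg at hA hB
      have huvx : u ++ v ++ x <+: s ++ p :=
        List.prefix_of_prefix_length_le (List.prefix_append _ y) hsp
          (by simpa using hA.le)
      have hsu : s <+: u :=
        List.prefix_of_prefix_length_le hs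
          (by simp [List.append_assoc]) hB.le
      obtain ⟨s₁, hs₁⟩ := hsu
      have hq : s ++ (s₁ ++ v ++ x) <+: s ++ p := by
        rw [← List.append_assoc, ← List.append_assoc, hs₁]; exact huvx
      have hq' : s₁ ++ v ++ x <+: p := by
        obtain ⟨r, hr⟩ := hq
        exact ⟨r, by
          have := hr
          rw [List.append_assoc s _ r] at this
          exact (List.append_cancel_left this)⟩
      exact List.IsInfix.trans ⟨s₁, [], by simp⟩ hq'.isInfix
end

section
/- Let an SLP in Chomsky normal form with n ≥ 1 nonterminals over an alphabet Σ be given by rhs and val as in the context, and let p be a string with |p| ≥ 2. If p is a substring of val(0), then there exist indices i, j, k with rhs(i) = (j, k) such that p is a substring of suffix_p(val(j)) ++ prefix_p(val(k)), where suffix_p(u) is the longest suffix of u that is a prefix of p and prefix_p(u) is the longest prefix of u that is a suffix of p. -/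
/-!
An occurrence of `p` in `val i` for a rule `i → j k` either lies inside `val j`, inside `val k`, or
splits as `p = s₀ ++ q₀` with `s₀` a suffix of `val j` and `q₀` a prefix of `val k`. In the
first two cases we descend to a larger nonterminal, which can happen only finitely often, and
a terminal cannot contain `p` because `|p| ≥ 2`. In the crossing case `s₀` is a suffix of the
longest suffix-prefix `s` of `val j` and `q₀` a prefix of the longest prefix-suffix `q` of
`val k`, so `p` occurs in `s ++ q`.
-/

section LongestOverlap

variable {α : Type*} {p u s t : List α}

lemma exists_isLongestSufPre (p u : List α) : ∃ s, IsLongestSufPre p u s := by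
  classical
  have hex : ∃ m, u.drop m <+: p := ⟨u.length, by simp⟩
  refine ⟨u.drop (Nat.find hex), List.drop_suffix _ _, Nat.find_spec hex, fun t ht htp => ?_⟩
  have hmin : Nat.find hex ≤ u.length - t.length :=
    Nat.find_min' hex (List.suffix_iff_eq_drop.mp ht ▸ htp)
  have := ht.length_le
  rw [List.length_drop]; omega

lemma exists_isLongestPreSuf (p u : List α) : ∃ q, IsLongestPreSuf p u q := by
  classical
  have hex : ∃ m, u.take (u.length - m) <:+ p := ⟨u.length, by simp⟩
  refine ⟨u.take (u.length - Nat.find hex), List.take_prefix _ _, Nat.find_spec hex,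
    fun t ht htp => ?_⟩
  have := ht.length_le
  have hmin : Nat.find hex ≤ u.length - t.length :=
    Nat.find_min' hex (by rwa [Nat.sub_sub_self this, ← List.prefix_iff_eq_take.mp ht])
  rw [List.length_take]; omega

lemma IsLongestSufPre.suffix_of_suffix (hs : IsLongestSufPre p u s) (htu : t <:+ u)
    (htp : t <+: p) : t <:+ s :=
  List.suffix_of_suffix_length_le htu hs.1 (hs.2.2 t htu htp)

lemma IsLongestPreSuf.prefix_of_prefix (hs : IsLongestPreSuf p u s) (htu : t <+: u)
    (htp : t <:+ p) : t <+: s :=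
  List.prefix_of_prefix_length_le htu hs.1 (hs.2.2 t htu htp)

end LongestOverlap

lemma List.IsInfix.append_cases {α : Type*} {p l r : List α} (h : p <:+: l ++ r) :
    p <:+: l ∨ p <:+: r ∨ ∃ s q, p = s ++ q ∧ s <:+ l ∧ q <+: r := by
  obtain ⟨w₁, w₂, hw⟩ := h
  rw [List.append_assoc, List.append_eq_append_iff] at hw
  rcases hw with ⟨a, rfl, hpr⟩ | ⟨c, rfl, rfl⟩
  · rcases List.append_eq_append_iff.mp hpr with ⟨b, rfl, rfl⟩ | ⟨c, rfl, rfl⟩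
    · exact .inl ⟨w₁, b, by simp⟩
    · exact .inr (.inr ⟨a, c, rfl, ⟨w₁, rfl⟩, ⟨w₂, rfl⟩⟩)
  · exact .inr (.inl ⟨c, w₂, by simp⟩)

lemma infix_append_of_isLongestSufPre_of_isLongestPreSuf {α : Type*} {p l r s q s₀ q₀ : List α}
    (hs : IsLongestSufPre p l s) (hq : IsLongestPreSuf p r q) (hp : p = s₀ ++ q₀)
    (hs₀ : s₀ <:+ l) (hq₀ : q₀ <+: r) : p <:+: s ++ q := by
  obtain ⟨s', rfl⟩ := hs.suffix_of_suffix hs₀ (hp ▸ List.prefix_append _ _)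
  obtain ⟨q', rfl⟩ := hq.prefix_of_prefix hq₀ (hp ▸ List.suffix_append _ _)
  exact ⟨s', q', by simp [hp]⟩

theorem exists_rule_infix_longestSufPre_append_longestPreSuf {ι α : Type*} [Preorder ι]
    [WellFoundedGT ι] {rhs : ι → α ⊕ (ι × ι)} {val : ι → List α}
    (hord : ∀ i j k, rhs i = Sum.inr (j, k) → i < j ∧ i < k)
    (hterm : ∀ i a, rhs i = Sum.inl a → val i = [a])
    (hrule : ∀ i j k, rhs i = Sum.inr (j, k) → val i = val j ++ val k)
    {p : List α} (hp : 2 ≤ p.length) (i : ι) (hi : p <:+: val i) :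
    ∃ i j k, rhs i = Sum.inr (j, k) ∧
      ∃ s q, IsLongestSufPre p (val j) s ∧ IsLongestPreSuf p (val k) q ∧ p <:+: s ++ q := by
  induction i using WellFoundedGT.induction with
  | _ i ih =>
    rcases hr : rhs i with a | ⟨j, k⟩
    · have := (hterm i a hr ▸ hi).length_le
      simp only [List.length_singleton] at this
      omega
    · obtain ⟨hij, hik⟩ := hord i j k hr
      rcases (hrule i j k hr ▸ hi).append_cases with hj | hk | ⟨s₀, q₀, hsq, hs₀, hq₀⟩
      · exact ih j hij hj
      · exact ih k hik hk
      · obtain ⟨s, hs⟩ := exists_isLongestSufPre p (val j)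
        obtain ⟨q, hq⟩ := exists_isLongestPreSuf p (val k)
        exact ⟨i, j, k, hr, s, q, hs, hq,
          infix_append_of_isLongestSufPre_of_isLongestPreSuf hs hq hsq hs₀ hq₀⟩

theorem stmt_4 {α : Type*} (n : ℕ) (hn : 1 ≤ n)
    (rhs : Fin n → α ⊕ (Fin n × Fin n)) (val : Fin n → List α)
    (hord : ∀ i j k : Fin n, rhs i = Sum.inr (j, k) → i < j ∧ i < k)
    (hterm : ∀ (i : Fin n) (a : α), rhs i = Sum.inl a → val i = [a])
    (hrule : ∀ i j k : Fin n, rhs i = Sum.inr (j, k) → val i = val j ++ val k)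
    (p : List α) (hp : 2 ≤ p.length) (hocc : p <:+: val ⟨0, hn⟩) :
    ∃ i j k : Fin n, rhs i = Sum.inr (j, k) ∧
      ∃ s q : List α, IsLongestSufPre p (val j) s ∧ IsLongestPreSuf p (val k) q ∧
        p <:+: (s ++ q) :=
  exists_rule_infix_longestSufPre_append_longestPreSuf hord hterm hrule hp _ hocc
end

section
/- Let u be a prefix of a string p and let w be any string. If p occurs in u ++ w at position i with i ≥ 1, then i is a period of u. -/
theorem stmt_5 {α : Type*} (p u w : List α) (hu : u <+: p)
    (i : ℕ) (hi : 1 ≤ i) (hocc : OccursAt p (u ++ w) i) :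
    IsPeriod u i := by
  obtain ⟨w₁, w₂, heq, hlen⟩ := hocc
  obtain ⟨t, ht⟩ := hu
  refine ⟨hi, fun j hj hji => ?_⟩
  have hup : u.length ≤ p.length := by
    rw [← ht, List.length_append]; omega
  set k := j + i - 1 with hk
  have hk1 : k < u.length := by omega
  have hk2 : i ≤ k := by omega
  have h1 : u[k]? = (u ++ w)[k]? := by
    rw [List.getElem?_append_left hk1]
  have h2 : (u ++ w)[k]? = p[k - i]? := by
    rw [heq, List.append_assoc, List.getElem?_append_right (by omega),
      hlen, List.getElem?_append_left (by omega)]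
  have h3 : p[k - i]? = u[k - i]? := by
    rw [← ht, List.getElem?_append_left (by omega)]
  have : u[k]? = u[k - i]? := by rw [h1, h2, h3]
  rw [this]
  congr 1
  omega
end

section
/- Let u be a nonempty prefix of a string p, let d = per(u) be the smallest period of u, and let w be any string. If p occurs in u ++ w at position i with 1 ≤ i and 2i ≤ |u|, then d divides i. -/
lemma period_iff' {α : Type*} (u : List α) (d : ℕ) :
    IsPeriod u d ↔ 1 ≤ d ∧ ∀ k : ℕ, k + d < u.length → u[k]? = u[k+d]? := by
  constructor
  · rintro ⟨h1, h2⟩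
    refine ⟨h1, fun k hk => ?_⟩
    have := h2 (k+1) (by omega) (by omega)
    simpa [Nat.add_sub_cancel, show k+1+d-1 = k+d by omega] using this
  · rintro ⟨h1, h2⟩
    refine ⟨h1, fun j hj hjd => ?_⟩
    have := h2 (j-1) (by omega)
    simpa [show j-1+d = j+d-1 by omega] using this

lemma fine_wilf_step {α : Type*} {u : List α} {d m : ℕ}
    (hd : IsPeriod u d) (hm : IsPeriod u m) (hdm : d < m) (hsum : m + d ≤ u.length) :
    IsPeriod u (m - d) := by
  rw [period_iff'] at hd hm ⊢
  refine ⟨by omega, fun k hk => ?_⟩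
  by_cases hc : k + m < u.length
  · have e1 := hm.2 k hc
    have e2 := hd.2 (k + m - d) (by omega)
    rw [show k + m - d + d = k + m by omega] at e2
    rw [show k + m - d = k + (m - d) by omega] at e2
    rw [e1, ← e2]
  · have hkd : d ≤ k := by omega
    have e1 := hd.2 (k - d) (by omega)
    rw [show k - d + d = k by omega] at e1
    have e2 := hm.2 (k - d) (by omega)
    rw [show k - d + m = k + (m - d) by omega] at e2
    rw [← e1, e2]

lemma div_of_period {α : Type*} {u : List α} {d : ℕ}
    (hd : IsPeriod u d) (hdmin : ∀ e : ℕ, IsPeriod u e → d ≤ e) :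
    ∀ m : ℕ, IsPeriod u m → m + d ≤ u.length → d ∣ m := by
  intro m
  induction m using Nat.strong_induction_on with
  | _ m ih =>
    intro hm hsum
    have hdm : d ≤ m := hdmin m hm
    rcases eq_or_lt_of_le hdm with h | h
    · exact h ▸ dvd_refl d
    · have hstep := fine_wilf_step hd hm h hsum
      have hd1 : 1 ≤ d := hd.1
      obtain ⟨q, hq⟩ := ih (m - d) (by omega) hstep (by omega)
      exact ⟨q + 1, by rw [Nat.mul_add, Nat.mul_one]; omega⟩

theorem stmt_6 {α : Type*} (p u w : List α) (hu : u <+: p) (hne : u ≠ [])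
    (d : ℕ) (hd : IsPeriod u d) (hdmin : ∀ e : ℕ, IsPeriod u e → d ≤ e)
    (i : ℕ) (hi : 1 ≤ i) (hi2 : 2 * i ≤ u.length)
    (hocc : OccursAt p (u ++ w) i) :
    d ∣ i := by
  obtain ⟨w₁, w₂, heq, hlen⟩ := hocc
  obtain ⟨t, hpt⟩ := hu
  have hup : u.length ≤ p.length := by
    rw [← hpt]; simp
  have hiper : IsPeriod u i := by
    rw [period_iff']
    refine ⟨hi, fun k hk => ?_⟩
    have h1 : u[k+i]? = (u ++ w)[k+i]? := (List.getElem?_append_left (by omega)).symm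
    rw [heq, List.append_assoc] at h1
    have h2 : (w₁ ++ (p ++ w₂))[k+i]? = (p ++ w₂)[k]? := by
      rw [List.getElem?_append_right (by omega)]
      congr 1
      omega
    have h3 : (p ++ w₂)[k]? = p[k]? :=
      List.getElem?_append_left (by omega)
    have h4 : p[k]? = u[k]? := by
      rw [← hpt]
      exact List.getElem?_append_left (by omega)
    rw [h1, h2, h3, h4]
  exact div_of_period hd hdmin i hiper (by have := hdmin i hiper; omega)
end

section
/- Let p and t be strings, and let d, k be integers with 1 ≤ d ≤ k < |p| such that the prefix p[1..k] is d-periodic and p[k+1] ≠ p[k+1−d]. Let L ≤ |t| be such that the prefix of t of length L is d-periodic. Then p does not occur in t at any position j with j + k + 1 ≤ L. -/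
theorem stmt_7 {α : Type*} (p t : List α) (d k : ℕ)
    (hd : 1 ≤ d) (hdk : d ≤ k) (hk : k < p.length)
    (hper : IsPeriod (p.take k) d) (hmis : p[k]? ≠ p[k-d]?)
    (L : ℕ) (hL : L ≤ t.length) (htper : IsPeriod (t.take L) d)
    (j : ℕ) (hj : j + k + 1 ≤ L) :
    ¬ OccursAt p t j := by
  rintro ⟨w₁, w₂, rfl, hw₁⟩
  -- t[j+i]? = p[i]? for i < p.length
  have hidx : ∀ i : ℕ, i < p.length → (w₁ ++ p ++ w₂)[j + i]? = p[i]? := by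
    intro i hi
    rw [List.append_assoc, List.getElem?_append_right (by omega),
      List.getElem?_append_left (by omega)]
    congr 1; omega
  set T := w₁ ++ p ++ w₂ with hT
  have hLlen : (T.take L).length = L := by
    simp [List.length_take]; omega
  have hper' := htper.2 (j + k - d + 1) (by omega) (by omega)
  have e1 : j + k - d + 1 - 1 = j + k - d := by omega
  have e2 : j + k - d + 1 + d - 1 = j + k := by omega
  rw [e1, e2] at hper'
  rw [List.getElem?_take_of_lt (by omega), List.getElem?_take_of_lt (by omega)] at hper'
  have h1 : T[j + k]? = p[k]? := hidx k hk
  have h2 : T[j + (k - d)]? = p[k - d]? := hidx (k - d) (by omega)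
  have e3 : j + (k - d) = j + k - d := by omega
  rw [e3] at h2
  exact hmis (by rw [← h1, ← hper', h2])
end

section
/- Let p and t be strings, let d ≥ 1, and let k ≤ |p| be such that the prefix p[1..k] is d-periodic. Suppose q ≥ 0 and i ∈ {1,…,k} satisfy q + i ≤ |t| and t[q+i] ≠ p[i]. Then p[1..k] does not occur in t at any position j such that j ≤ q, d divides q − j, and j + k ≥ q + i. -/
lemma period_mul {α : Type*} {u : List α} {d : ℕ} (hper : IsPeriod u d) :
    ∀ (n a : ℕ), 1 ≤ a → a + n * d ≤ u.length → u[a-1]? = u[a + n * d - 1]? := by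
  intro n
  induction n with
  | zero => intro a _ _; simp
  | succ n ih =>
    intro a ha hle
    have hd := hper.1
    have h1 : a + n * d ≤ u.length := by nlinarith
    have := hper.2 (a + n * d) (by omega) (by nlinarith [Nat.succ_mul n d])
    rw [ih a ha h1, this]
    congr 1
    ring_nf

theorem stmt_8 {α : Type*} (p t : List α) (d k : ℕ)
    (hd : 1 ≤ d) (hk : k ≤ p.length) (hper : IsPeriod (p.take k) d)
    (q i : ℕ) (hi1 : 1 ≤ i) (hik : i ≤ k) (hqi : q + i ≤ t.length)
    (hmis : t[q+i-1]? ≠ p[i-1]?)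
    (j : ℕ) (hjq : j ≤ q) (hdiv : d ∣ (q - j)) (hjk : q + i ≤ j + k) :
    ¬ OccursAt (p.take k) t j := by
  rintro ⟨w₁, w₂, rfl, hw₁⟩
  obtain ⟨n, hn⟩ := hdiv
  set u := p.take k with hu
  have hul : u.length = k := by simp [hu, hk]
  apply hmis
  -- t[q+i-1]? = u[q+i-1-j]?
  have h1 : (w₁ ++ u ++ w₂)[q+i-1]? = u[q+i-1-j]? := by
    rw [List.append_assoc, List.getElem?_append_right (by omega),
        List.getElem?_append_left (by omega)]
    congr 1; omega
  rw [h1]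
  -- u[q+i-1-j]? = u[i-1]?
  have h2 : u[i-1]? = u[q+i-1-j]? := by
    have hn' : q - j = n * d := by rw [hn, Nat.mul_comm]
    have := period_mul hper n i hi1 (by omega)
    rw [this]; congr 1; omega
  rw [← h2, hu, List.getElem?_take_of_lt (l := p) (by omega : i - 1 < k)]
end

section
/- Let t be a string whose prefix of length L (L ≤ |t|) is d-periodic, and let p be a d-periodic string with d ≤ |p|. Suppose the prefix p[1..d] occurs in t at a position q with q + d ≤ L. Then for every position j with j ≥ 0, j ≡ q (mod d), and j + |p| ≤ L, the string p occurs in t at position j. -/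
lemma per_step {α : Type*} {u : List α} {d : ℕ} (h : IsPeriod u d) {m : ℕ}
    (hm : m + d < u.length) : u[m]? = u[m+d]? := by
  have := h.2 (m+1) (by omega) (by omega)
  simpa using this

lemma per_iter {α : Type*} {u : List α} {d : ℕ} (h : IsPeriod u d) (n : ℕ) :
    ∀ m : ℕ, m + n*d < u.length → u[m]? = u[m+n*d]? := by
  induction n with
  | zero => intro m _; simp
  | succ n ih =>
    intro m hm
    have key : m + (n+1)*d = (m+d) + n*d := by ring
    rw [key] at hm ⊢
    have h1 : u[m]? = u[m+d]? :=
      per_step h (lt_of_le_of_lt (Nat.le_add_right _ _) hm)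
    rw [h1]; exact ih (m+d) hm

lemma per_cong {α : Type*} {u : List α} {d : ℕ} (h : IsPeriod u d) {a b : ℕ}
    (hab : a ≡ b [MOD d]) (ha : a < u.length) (hb : b < u.length) :
    u[a]? = u[b]? := by
  rcases le_total a b with hle | hle
  · obtain ⟨n, hn⟩ := (Nat.modEq_iff_dvd' hle).mp hab
    have : b = a + n*d := by rw [Nat.mul_comm]; omega
    subst this; exact per_iter h n a hb
  · obtain ⟨n, hn⟩ := (Nat.modEq_iff_dvd' hle).mp hab.symm
    have : a = b + n*d := by rw [Nat.mul_comm]; omega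
    subst this; exact (per_iter h n b ha).symm

lemma occ_get {α : Type*} {u w : List α} {i : ℕ} (h : OccursAt u w i) :
    ∀ m : ℕ, m < u.length → w[i+m]? = u[m]? := by
  obtain ⟨w₁, w₂, rfl, hlen⟩ := h
  intro m hm
  rw [List.append_assoc, List.getElem?_append_right (by omega), hlen]
  simp [List.getElem?_append, hm]

theorem stmt_9 {α : Type*} (p t : List α) (d L : ℕ) (hL : L ≤ t.length)
    (htper : IsPeriod (t.take L) d) (hpper : IsPeriod p d) (hdp : d ≤ p.length)
    (q : ℕ) (hq : OccursAt (p.take d) t q) (hqL : q + d ≤ L)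
    (j : ℕ) (hmod : j ≡ q [MOD d]) (hjL : j + p.length ≤ L) :
    OccursAt p t j := by
  have hd1 : 1 ≤ d := hpper.1
  have httlen : (t.take L).length = L := by simp [Nat.min_eq_left hL]
  -- pointwise fact
  have key : ∀ k : ℕ, k < p.length → t[j+k]? = p[k]? := by
    intro k hk
    have hkd : k % d < d := Nat.mod_lt _ (by omega)
    have h1 : p[k]? = p[k % d]? :=
      per_cong hpper (Nat.mod_modEq k d).symm hk (by omega)
    have hcong : j + k ≡ q + k % d [MOD d] := hmod.add (Nat.mod_modEq k d).symm
    have h2 : (t.take L)[j+k]? = (t.take L)[q + k % d]? :=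
      per_cong htper hcong (by omega) (by omega)
    rw [List.getElem?_take, List.getElem?_take] at h2
    rw [if_pos (by omega), if_pos (by omega)] at h2
    have h3 : t[q + k % d]? = (p.take d)[k % d]? :=
      occ_get hq (k % d) (by rw [List.length_take]; omega)
    rw [List.getElem?_take, if_pos hkd] at h3
    rw [h2, h3, h1]
  -- assemble
  have hjt : j + p.length ≤ t.length := le_trans hjL hL
  have hp : p = (t.drop j).take p.length := by
    apply List.ext_getElem?
    intro k
    by_cases hk : k < p.length
    · rw [List.getElem?_take, if_pos hk, List.getElem?_drop, key k hk]
    · rw [List.getElem?_take, if_neg hk, List.getElem?_eq_none (by omega)]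
  refine ⟨t.take j, t.drop (j + p.length), ?_, by rw [List.length_take]; omega⟩
  conv_lhs => rw [← List.take_append_drop j t,
    ← List.take_append_drop p.length (t.drop j)]
  rw [← hp, List.drop_drop, List.append_assoc]
end

section
/- Let p, u, v, x be strings such that p occurs in u ++ v ++ x, p does not occur in u ++ v, p does not occur in v ++ x, and v occurs in p at two distinct positions. Then v has a period d with 1 ≤ d ≤ max(|u|, |x|). -/
private lemma occ_get_s10 {α : Type*} {v p : List α} {a : ℕ} (h : OccursAt v p a)
    {j : ℕ} (hj : j < v.length) : p[a + j]? = v[j]? := by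
  obtain ⟨w₁, w₂, rfl, hw⟩ := h
  rw [List.append_assoc, List.getElem?_append_right (by omega),
    List.getElem?_append_left (by omega)]
  congr 1
  omega

private lemma occ_len {α : Type*} {v p : List α} {a : ℕ} (h : OccursAt v p a) :
    a + v.length ≤ p.length := by
  obtain ⟨w₁, w₂, rfl, hw⟩ := h
  simp [List.length_append]
  omega

private lemma period_of_two_occ {α : Type*} {v p : List α} {a b : ℕ} (h : a < b)
    (ha : OccursAt v p a) (hb : OccursAt v p b) : IsPeriod v (b - a) := by
  refine ⟨by omega, fun i hi hile => ?_⟩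
  have h1 : i - 1 < v.length := by omega
  have h2 : i + (b - a) - 1 < v.length := by omega
  rw [← occ_get_s10 hb h1, ← occ_get_s10 ha h2]
  congr 1
  omega

theorem stmt_10 {α : Type*} (p u v x : List α)
    (h1 : p <:+: (u ++ v ++ x)) (h2 : ¬ p <:+: (u ++ v)) (h3 : ¬ p <:+: (v ++ x))
    (a b : ℕ) (hab : a ≠ b) (ha : OccursAt v p a) (hb : OccursAt v p b) :
    ∃ d : ℕ, IsPeriod v d ∧ d ≤ max u.length x.length := by
  obtain ⟨w₁, w₂, hw⟩ := h1
  -- hw : w₁ ++ p ++ w₂ = u ++ v ++ x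
  set s := w₁.length with hs
  -- Step 1 : s < u.length
  have hw₁pre : w₁ <+: u ++ v ++ x := ⟨p ++ w₂, by rw [← hw]; simp⟩
  have hupre : u <+: u ++ v ++ x := ⟨v ++ x, by simp⟩
  have hs1 : s < u.length := by
    by_contra hle
    push_neg at hle
    obtain ⟨w₁', hw₁'⟩ := List.prefix_of_prefix_length_le hupre hw₁pre hle
    have hkey : u ++ (w₁' ++ p ++ w₂) = u ++ (v ++ x) := by
      simp only [← List.append_assoc]
      rw [hw₁', hw]
    exact h3 ⟨w₁', w₂, List.append_cancel_left hkey⟩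
  -- Step 2 : u.length + v.length < s + p.length
  have hw₁ppre : w₁ ++ p <+: u ++ v ++ x := ⟨w₂, hw⟩
  have huvpre : u ++ v <+: u ++ v ++ x := ⟨x, by simp⟩
  have hs2 : u.length + v.length < s + p.length := by
    by_contra hle
    push_neg at hle
    obtain ⟨r, hr⟩ := List.prefix_of_prefix_length_le hw₁ppre huvpre (by simp; omega)
    exact h2 ⟨w₁, r, hr⟩
  -- Step 3 : v occurs in p at position c = u.length - s
  obtain ⟨u', hu'⟩ := List.prefix_of_prefix_length_le hw₁pre hupre (by omega)
  have hu'len : u'.length = u.length - s := by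
    have := congrArg List.length hu'
    simp at this
    omega
  have hmid : u' ++ v ++ x = p ++ w₂ := by
    have hkey : w₁ ++ (u' ++ v ++ x) = w₁ ++ (p ++ w₂) := by
      simp only [← List.append_assoc]
      rw [hu', hw]
    exact List.append_cancel_left hkey
  have huvpre' : u' ++ v <+: p ++ w₂ := ⟨x, hmid⟩
  have hppre : p <+: p ++ w₂ := ⟨w₂, rfl⟩
  obtain ⟨r, hr⟩ := List.prefix_of_prefix_length_le huvpre' hppre (by simp; omega)
  have hc : OccursAt v p (u.length - s) := ⟨u', r, hr.symm, hu'len⟩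
  -- length facts
  have hlen : s + p.length + w₂.length = u.length + v.length + x.length := by
    have := congrArg List.length hw
    simp at this
    omega
  set c := u.length - s with hcdef
  have hplen : c + v.length ≤ p.length := occ_len hc
  have halen : a + v.length ≤ p.length := occ_len ha
  have hblen : b + v.length ≤ p.length := occ_len hb
  -- pick q ∈ {a, b} with q ≠ c
  have key : ∀ q : ℕ, OccursAt v p q → q ≠ c →
      ∃ d : ℕ, IsPeriod v d ∧ d ≤ max u.length x.length := by
    intro q hq hqc
    have hqlen : q + v.length ≤ p.length := occ_len hq
    rcases lt_or_gt_of_ne hqc with hlt | hgt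
    · exact ⟨c - q, period_of_two_occ hlt hq hc, by
        have : c - q ≤ u.length := by omega
        omega⟩
    · exact ⟨q - c, period_of_two_occ hgt hc hq, by
        have : q - c ≤ x.length := by omega
        omega⟩
  rcases eq_or_ne a c with hac | hac
  · exact key b hb (by omega)
  · exact key a ha hac
end

section
/- Let p = r ++ s ++ t be a factorization of a string p with r nonempty, and let d be an integer with 1 ≤ d ≤ |s| and p[|r|] ≠ p[|r|+d]. If p occurs in a string w at position i, then it is not the case that i + |r| ≥ d and s occurs in w at position i + |r| − d. -/
theorem occ_getElem? {α : Type*} (u w : List α) (i : ℕ) (h : OccursAt u w i)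
    (k : ℕ) (hk : k < u.length) : w[i + k]? = u[k]? := by
  obtain ⟨w₁, w₂, hw, hl⟩ := h
  subst hw hl
  rw [List.append_assoc, List.getElem?_append_right (by omega),
    List.getElem?_append_left (by omega)]
  congr 1
  omega

theorem stmt_11 {α : Type*} (p r s t w : List α) (hp : p = r ++ s ++ t)
    (hr : r ≠ []) (d : ℕ) (hd1 : 1 ≤ d) (hds : d ≤ s.length)
    (hmis : p[r.length - 1]? ≠ p[r.length + d - 1]?)
    (i : ℕ) (hocc : OccursAt p w i) :
    ¬ (d ≤ i + r.length ∧ OccursAt s w (i + r.length - d)) := by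
  rintro ⟨hdi, hsocc⟩
  have hrlen : 1 ≤ r.length := List.length_pos_iff.mpr hr
  -- value of w at position i + r.length - 1 equals p[r.length - 1]
  have h1 : w[i + r.length - 1]? = p[r.length - 1]? := by
    have := occ_getElem? p w i hocc (r.length - 1)
      (by simp [hp]; omega)
    rw [show i + (r.length - 1) = i + r.length - 1 by omega] at this
    exact this
  -- value of w at position (i + r.length - d) + (d - 1) equals s[d-1]
  have h2 : w[i + r.length - 1]? = s[d - 1]? := by
    have := occ_getElem? s w (i + r.length - d) hsocc (d - 1) (by omega)
    rw [show i + r.length - d + (d - 1) = i + r.length - 1 by omega] at this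
    exact this
  -- p[r.length + d - 1]? = s[d-1]?
  have h3 : p[r.length + d - 1]? = s[d - 1]? := by
    rw [hp, List.append_assoc,
      List.getElem?_append_right (by omega),
      List.getElem?_append_left (by omega)]
    congr 1
    omega
  exact hmis (h1 ▸ h2 ▸ h3.symm ▸ rfl)
end

section
/- Let s be a nonempty string with smallest period d = per(s), and let z be a d-periodic string. If s occurs in z at positions a and b, then d divides b − a. -/
/-- 0-based reformulation of `IsPeriod`. -/
lemma isPeriod_get {α : Type*} {u : List α} {d : ℕ} (h : IsPeriod u d) :
    ∀ j : ℕ, j + d < u.length → u[j]? = u[j+d]? := by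
  intro j hj
  have := h.2 (j+1) (by omega) (by omega)
  simpa [Nat.add_sub_cancel, show j + 1 + d - 1 = j + d by omega] using this

lemma isPeriod_of_get {α : Type*} {u : List α} {d : ℕ} (hd : 1 ≤ d)
    (h : ∀ j : ℕ, j + d < u.length → u[j]? = u[j+d]?) : IsPeriod u d := by
  refine ⟨hd, fun i hi hle => ?_⟩
  have := h (i-1) (by omega)
  simpa [show i - 1 + d = i + d - 1 by omega] using this

lemma occursAt_get {α : Type*} {s z : List α} {a : ℕ} (h : OccursAt s z a) :
    a + s.length ≤ z.length ∧ ∀ j < s.length, z[a+j]? = s[j]? := by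
  obtain ⟨w₁, w₂, hw, hlen⟩ := h
  subst hw
  constructor
  · simp [List.length_append]; omega
  · intro j hj
    rw [List.append_assoc, List.getElem?_append_right (by omega),
      show a + j - w₁.length = j by omega, List.getElem?_append_left hj]

lemma period_iter {α : Type*} {z : List α} {d : ℕ}
    (hz : ∀ j, j + d < z.length → z[j]? = z[j+d]?) :
    ∀ k j, j + k*d < z.length → z[j]? = z[j + k*d]? := by
  intro k
  induction k with
  | zero => simp
  | succ k ih =>
    intro j hj
    have h1 : z[j]? = z[j + k*d]? := ih j (by nlinarith [Nat.succ_mul k d])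
    have h2 : z[j + k*d]? = z[j + k*d + d]? := hz _ (by rw [Nat.succ_mul] at hj; omega)
    rw [h1, h2]
    congr 1
    rw [Nat.succ_mul]; omega

lemma stmt_aux {α : Type*} (s z : List α) (hne : s ≠ [])
    (d : ℕ) (hd : IsPeriod s d) (hdmin : ∀ e : ℕ, IsPeriod s e → d ≤ e)
    (hz : IsPeriod z d)
    (a b : ℕ) (ha : OccursAt s z a) (hb : OccursAt s z b) (hab : a ≤ b) :
    d ∣ (b - a) := by
  have hslen : 1 ≤ s.length := List.length_pos_iff.mpr hne
  -- d ≤ |s|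
  have hdle : d ≤ s.length := by
    refine hdmin s.length ⟨hslen, fun i hi hle => ?_⟩
    omega
  obtain ⟨hza, hga⟩ := occursAt_get ha
  obtain ⟨hzb, hgb⟩ := occursAt_get hb
  have hd1 : 1 ≤ d := hd.1
  set r := (b - a) % d with hr
  have hrlt : r < d := Nat.mod_lt _ hd1
  obtain ⟨q, hqr⟩ : ∃ q, b - a = q * d + r :=
    ⟨(b - a) / d, by rw [mul_comm]; exact (Nat.div_add_mod _ _).symm⟩
  -- substring at position a + q*d equals s
  have hiter := period_iter (isPeriod_get hz)
  have hcomm : d * q = q * d := Nat.mul_comm d q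
  have key : ∀ j < s.length, z[a + q*d + j]? = s[j]? := by
    intro j hj
    have h1 : z[a + j]? = z[a + j + q*d]? := hiter q (a+j) (by omega)
    rw [show a + q*d + j = a + j + q*d by omega, ← h1]
    exact hga j hj
  -- r is a period of s unless r = 0
  rcases Nat.eq_zero_or_pos r with hr0 | hrpos
  · exact ⟨q, by omega⟩
  · exfalso
    have hper : IsPeriod s r := by
      refine isPeriod_of_get hrpos (fun j hj => ?_)
      have h1 : z[a + q*d + (j+r)]? = s[j+r]? := key (j+r) hj
      have h2 : z[b + j]? = s[j]? := hgb j (by omega)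
      rw [show a + q*d + (j+r) = b + j by omega] at h1
      rw [← h1, ← h2]
    have := hdmin r hper
    omega

theorem stmt_14 {α : Type*} (s z : List α) (hne : s ≠ [])
    (d : ℕ) (hd : IsPeriod s d) (hdmin : ∀ e : ℕ, IsPeriod s e → d ≤ e)
    (hz : IsPeriod z d)
    (a b : ℕ) (ha : OccursAt s z a) (hb : OccursAt s z b) :
    (d : ℤ) ∣ (b : ℤ) - (a : ℤ) := by
  rcases le_total a b with hab | hab
  · have := Int.natCast_dvd_natCast.mpr (stmt_aux s z hne d hd hdmin hz a b ha hb hab)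
    rwa [Nat.cast_sub hab] at this
  · have := Int.natCast_dvd_natCast.mpr (stmt_aux s z hne d hd hdmin hz b a hb ha hab)
    rw [Nat.cast_sub hab] at this
    exact dvd_sub_comm.mp this
end

section
/- Let p, b, c be strings and let z be a prefix of c such that the longest prefix of c that is a suffix of p is itself a prefix of z. Then the longest prefix of b ++ c that is a suffix of p is a prefix of b ++ z. -/
theorem stmt_15 {α : Type*} (p b c z M M' : List α) (hz : z <+: c)
    (hM : IsLongestPreSuf p c M) (hMz : M <+: z)
    (hM' : IsLongestPreSuf p (b ++ c) M') :
    M' <+: (b ++ z) := by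
  obtain ⟨h1, h2, h3⟩ := hM'
  obtain ⟨m1, m2, m3⟩ := hM
  rcases le_or_gt M'.length b.length with hle | hlt
  · exact (List.prefix_of_prefix_length_le h1 (b.prefix_append c) hle).trans
      (b.prefix_append z)
  · have hb : b <+: M' :=
      List.prefix_of_prefix_length_le (b.prefix_append c) h1 hlt.le
    obtain ⟨t, ht⟩ := hb
    subst ht
    have htc : t <+: c := by
      obtain ⟨k, hk⟩ := h1
      rw [List.append_assoc, List.append_cancel_left_eq] at hk
      exact ⟨k, hk⟩
    have htp : t <:+ p := (List.suffix_append b t).trans h2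
    have hlen : t.length ≤ M.length := m3 t htc htp
    have htM : t <+: M := List.prefix_of_prefix_length_le htc m1 hlen
    obtain ⟨w, hw⟩ := htM.trans hMz
    exact ⟨w, by rw [← hw, List.append_assoc]⟩
end

section
/- Let p, b, c be strings such that b is not a substring of p. Then the longest prefix of b ++ c that is a suffix of p equals the longest prefix of b that is a suffix of p. -/
theorem stmt_16 {α : Type*} (p b c M M' : List α) (hnb : ¬ b <:+: p)
    (hM : IsLongestPreSuf p (b ++ c) M) (hM' : IsLongestPreSuf p b M') :
    M = M' := by
  obtain ⟨hMpre, hMsuf, hMmax⟩ := hM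
  obtain ⟨hM'pre, hM'suf, hM'max⟩ := hM'
  -- M.length ≤ b.length, else b ≤ M ≤ suffix of p
  have hlen : M.length ≤ b.length := by
    by_contra h
    push_neg at h
    have hb : b <+: M :=
      List.prefix_of_prefix_length_le (List.prefix_append b c) hMpre h.le
    exact hnb (hb.isInfix.trans hMsuf.isInfix)
  -- M is a prefix of b
  have hMb : M <+: b :=
    List.prefix_of_prefix_length_le hMpre (List.prefix_append b c)
      (by simpa using hlen)
  have h1 : M.length ≤ M'.length := hM'max M hMb hMsuf
  have h2 : M'.length ≤ M.length :=
    hMmax M' (hM'pre.trans (List.prefix_append b c)) hM'suf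
  -- equal-length suffixes of p are equal
  obtain ⟨u, hu⟩ := hMsuf
  obtain ⟨v, hv⟩ := hM'suf
  have : M.reverse <+: p.reverse := ⟨u.reverse, by rw [← List.reverse_append, hu]⟩
  obtain ⟨v', hv'⟩ : M'.reverse <+: p.reverse := ⟨v.reverse, by rw [← List.reverse_append, hv]⟩
  have := List.prefix_of_prefix_length_le this ⟨v', hv'⟩ (by simpa using h1)
  have := this.eq_of_length (by simp; omega)
  simpa using congrArg List.reverse this
end

section
/- Let p, b, c be strings such that c is not a substring of p. Then the longest suffix of b ++ c that is a prefix of p equals the longest suffix of c that is a prefix of p. -/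
theorem stmt_17 {α : Type*} (p b c M M' : List α) (hnc : ¬ c <:+: p)
    (hM : IsLongestSufPre p (b ++ c) M) (hM' : IsLongestSufPre p c M') :
    M = M' := by
  obtain ⟨hs, hp, hmax⟩ := hM
  obtain ⟨hs', hp', hmax'⟩ := hM'
  have hMc : M <:+ c := by
    rcases List.suffix_or_suffix_of_suffix hs (List.suffix_append b c) with h | h
    · exact h
    · exfalso
      apply hnc
      obtain ⟨w, hw⟩ := h
      obtain ⟨r, hr⟩ := hp
      exact ⟨w, r, by rw [← hr, ← hw]⟩
  have h1 : M.length ≤ M'.length := hmax' M hMc hp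
  have h2 : M'.length ≤ M.length := hmax M' (hs'.trans (List.suffix_append b c)) hp'
  rcases List.suffix_or_suffix_of_suffix hMc hs' with h | h
  · exact h.eq_of_length (le_antisymm h1 h2)
  · exact (h.eq_of_length (le_antisymm h2 h1)).symm
end

section
/- Let p, b, c be strings and let y be a suffix of b such that the longest suffix of b that is a prefix of p is itself a suffix of y. Then the longest suffix of b ++ c that is a prefix of p is a suffix of y ++ c. -/
private lemma suffix_of_suffix_length_le' {α : Type*} {s t l : List α}
    (h1 : s <:+ l) (h2 : t <:+ l) (h : s.length ≤ t.length) : s <:+ t := by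
  rw [← List.reverse_prefix] at *
  exact List.prefix_of_prefix_length_le h1 h2 (by simpa using h)

theorem stmt_18 {α : Type*} (p b c y M M' : List α) (hy : y <:+ b)
    (hM : IsLongestSufPre p b M) (hMy : M <:+ y)
    (hM' : IsLongestSufPre p (b ++ c) M') :
    M' <:+ (y ++ c) := by
  obtain ⟨hsuf, hpre, hmax⟩ := hM'
  by_cases hlen : M'.length ≤ (y ++ c).length
  · exact suffix_of_suffix_length_le' hsuf (by obtain ⟨w,hw⟩ := hy; exact ⟨w, by rw [← hw, List.append_assoc]⟩) hlen
  · exfalso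
    push_neg at hlen
    simp only [List.length_append] at hlen
    obtain ⟨w, hw⟩ := hsuf
    have hwb : w <+: b := by
      have hwp : w <+: b ++ c := ⟨M', hw⟩
      refine List.prefix_of_prefix_length_le hwp (List.prefix_append b c) ?_
      have := congrArg List.length hw
      simp only [List.length_append] at this
      omega
    obtain ⟨t, ht⟩ := hwb
    have htM' : M' = t ++ c := by
      have : w ++ (t ++ c) = w ++ M' := by rw [hw, ← ht, List.append_assoc]
      exact (List.append_cancel_left this).symm
    have htb : t <:+ b := ⟨w, ht⟩
    have htp : t <+: p := by
      refine List.IsPrefix.trans ?_ hpre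
      rw [htM']; exact ⟨c, rfl⟩
    have hMle : M.length ≤ y.length := hMy.length_le
    have := hM.2.2 t htb htp
    have : t.length + c.length = M'.length := by
      have := congrArg List.length htM'; simp at this; omega
    omega
end
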